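/- Let (C, d, U, D₁, D₂) and (C′, d′, U′, D₁′, D₂′) be Floer data over a field Λ, let (c, φ, μ, Δ₁, Δ₂) be a cobordism datum between them, and let ĈW : Ĉ → Ĉ′ be as defined in the context. Then ĈW is a chain map: d̂′ ∘ ĈW = ĈW ∘ d̂. -/

import Mathlib

noncomputable section

variable (Λ : Type*) (V : Type*) [Field Λ] [AddCommGroup V] [Module Λ V]

/-- A Floer datum over the field `Λ`. -/
structure FloerDatum where
  gr : ZMod 8 → Submodule Λ V
  internal : DirectSum.IsInternal gr
  d : V →ₗ[Λ] V
  U : V →ₗ[Λ] V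
  D₁ : V →ₗ[Λ] Λ
  D₂ : Λ →ₗ[Λ] V
  d_mem : ∀ (i : ZMod 8), ∀ v ∈ gr i, d v ∈ gr (i - 1)
  U_mem : ∀ (i : ZMod 8), ∀ v ∈ gr i, U v ∈ gr (i - 4)
  D₁_vanish : ∀ (i : ZMod 8), i ≠ 1 → ∀ v ∈ gr i, D₁ v = 0
  D₂_mem : ∀ a : Λ, D₂ a ∈ gr 4
  d_d : d ∘ₗ d = 0
  D₁_d : D₁ ∘ₗ d = 0
  d_D₂ : d ∘ₗ D₂ = 0
  U_rel : U ∘ₗ d - d ∘ₗ U + D₂ ∘ₗ D₁ = 0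

variable (V' : Type*) [AddCommGroup V'] [Module Λ V']
variable {Λ V V'}

/-- A cobordism datum between two Floer data. -/
structure CobordismDatum (F : FloerDatum Λ V) (F' : FloerDatum Λ V') where
  c : Λ
  φ : V →ₗ[Λ] V'
  μ : V →ₗ[Λ] V'
  Δ₁ : V →ₗ[Λ] Λ
  Δ₂ : Λ →ₗ[Λ] V'
  φ_mem : ∀ (i : ZMod 8), ∀ v ∈ F.gr i, φ v ∈ F'.gr i
  μ_mem : ∀ (i : ZMod 8), ∀ v ∈ F.gr i, μ v ∈ F'.gr (i - 3)
  Δ₁_vanish : ∀ (i : ZMod 8), i ≠ 0 → ∀ v ∈ F.gr i, Δ₁ v = 0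
  Δ₂_mem : ∀ a : Λ, Δ₂ a ∈ F'.gr 5
  rel_d : φ ∘ₗ F.d = F'.d ∘ₗ φ
  rel_D₁ : Δ₁ ∘ₗ F.d + c • F.D₁ = F'.D₁ ∘ₗ φ
  rel_D₂ : φ ∘ₗ F.D₂ = c • F'.D₂ - F'.d ∘ₗ Δ₂
  rel_U : μ ∘ₗ F.d + F'.d ∘ₗ μ + Δ₂ ∘ₗ F.D₁ + φ ∘ₗ F.U - F'.U ∘ₗ φ - F'.D₂ ∘ₗ Δ₁ = 0

variable {W : Type*} [AddCommGroup W] [Module Λ W]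
variable {M : Type*} [AddCommGroup M] [Module Λ M]

/-- `p = Σ aᵢ xⁱ ↦ Σ f i aᵢ`, as a linear map on polynomials. -/
def polySum (f : ℕ → (Λ →ₗ[Λ] W)) : Polynomial Λ →ₗ[Λ] W where
  toFun p := p.sum fun i a => f i a
  map_add' p q :=
    Polynomial.sum_add_index p q _ (fun i => map_zero (f i)) (fun i b c => map_add (f i) b c)
  map_smul' a p := by
    show (a • p).sum (fun i b => f i b) = a • p.sum fun i b => f i b
    rw [Polynomial.sum_smul_index p a _ (fun i => map_zero (f i)),
      Polynomial.sum, Polynomial.sum, Finset.smul_sum]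
    exact Finset.sum_congr rfl fun n _ => by rw [← smul_eq_mul, map_smul]

/-- The differential `d̂` on `Ĉ = C ⊕ Λ[x]`. -/
def hatd (F : FloerDatum Λ V) : (V × Polynomial Λ) →ₗ[Λ] (V × Polynomial Λ) :=
  ((F.d ∘ₗ LinearMap.fst Λ V (Polynomial Λ))
    - (polySum fun i => (F.U ^ i) ∘ₗ F.D₂) ∘ₗ LinearMap.snd Λ V (Polynomial Λ)).prod 0

/-- The map `X̂(α, p) = (U α, D₁ α + x·p)` on `Ĉ`. -/
def hatX (F : FloerDatum Λ V) : (V × Polynomial Λ) →ₗ[Λ] (V × Polynomial Λ) :=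
  (F.U ∘ₗ LinearMap.fst Λ V (Polynomial Λ)).prod
    ((Algebra.linearMap Λ (Polynomial Λ)) ∘ₗ F.D₁ ∘ₗ LinearMap.fst Λ V (Polynomial Λ)
      + (LinearMap.mulLeft Λ (Polynomial.X : Polynomial Λ)) ∘ₗ LinearMap.snd Λ V (Polynomial Λ))

/-- The cobordism map `ĈW : Ĉ → Ĉ′`. -/
def hatCW {F : FloerDatum Λ V} {F' : FloerDatum Λ V'} (G : CobordismDatum F F') :
    (V × Polynomial Λ) →ₗ[Λ] (V' × Polynomial Λ) :=
  (G.φ ∘ₗ LinearMap.fst Λ V (Polynomial Λ)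
    + (polySum fun i => (F'.U ^ i) ∘ₗ G.Δ₂
        + ∑ k ∈ Finset.range i, (F'.U ^ k) ∘ₗ G.μ ∘ₗ (F.U ^ (i - 1 - k)) ∘ₗ F.D₂)
        ∘ₗ LinearMap.snd Λ V (Polynomial Λ)).prod
  (G.c • LinearMap.snd Λ V (Polynomial Λ)
    + (polySum fun k =>
        (∑ i ∈ Finset.range k,
          (LinearMap.smulRight (F'.D₁ ∘ₗ (F'.U ^ (k - 1 - i)) ∘ₗ G.Δ₂)
              ((Polynomial.X : Polynomial Λ) ^ i)
            + LinearMap.smulRight (G.Δ₁ ∘ₗ (F.U ^ (k - 1 - i)) ∘ₗ F.D₂)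
              ((Polynomial.X : Polynomial Λ) ^ i)))
        + ∑ j ∈ Finset.range k, ∑ i ∈ Finset.range j,
            LinearMap.smulRight
              (F'.D₁ ∘ₗ (F'.U ^ (j - i - 1)) ∘ₗ G.μ ∘ₗ (F.U ^ (k - j - 1)) ∘ₗ F.D₂)
              ((Polynomial.X : Polynomial Λ) ^ i))
      ∘ₗ LinearMap.snd Λ V (Polynomial Λ))

/-!
On `C ⊕ 0` both sides of `d̂′ ∘ ĈW = ĈW ∘ d̂` reduce to `φ ∘ d = d′ ∘ φ`. On `a xⁿ`, write
`Sₙ = Uⁿ D₂`; the first component of `ĈW` is `Tₙ a` with `Tₙ₊₁ = U′ Tₙ + μ Sₙ`, and its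
polynomial part is `c a xⁿ + ∑_{i<n} Rₙ₋₁₋ᵢ(a) xⁱ` with `Rₘ = D₁′ Tₘ + Δ₁ Sₘ`. The claim thus
becomes `d′ Tₙ + φ Sₙ = c S′ₙ + ∑_{i<n} S′ᵢ Rₙ₋₁₋ᵢ`, which follows by induction on `n` from
the relations `d′ U′ = U′ d′ + D₂′ D₁′` and `φ U = U′ φ + D₂′ Δ₁ − μ d − d′ μ − Δ₂ D₁`, since
`Sₙ` is a `d`-cycle annihilated by `D₁` for degree reasons.
-/

open Finset Polynomial

lemma Finset.sum_range_sum_range_eq_sum_range_sum_range_sub {M : Type*} [AddCommMonoid M]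
    (f : ℕ → ℕ → M) (n : ℕ) :
    ∑ j ∈ range n, ∑ i ∈ range j, f i j
      = ∑ i ∈ range n, ∑ l ∈ range (n - 1 - i), f i (i + 1 + l) := by
  rw [Finset.sum_comm' (t' := range n) (s' := fun i => Ico (i + 1) n)
    (fun j i => by simp only [mem_range, mem_Ico]; omega)]
  refine sum_congr rfl fun i _ => ?_
  rw [sum_Ico_eq_sum_range, Nat.sub_add_eq, Nat.sub_right_comm]

lemma polySum_monomial (f : ℕ → Λ →ₗ[Λ] W) (n : ℕ) (a : Λ) :
    polySum f (monomial n a) = f n a :=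
  sum_monomial_index a _ (map_zero _)

lemma polySum_smul_X_pow (f : ℕ → Λ →ₗ[Λ] W) (n : ℕ) (a : Λ) :
    polySum f (a • X ^ n) = f n a := by
  rw [smul_X_eq_monomial, polySum_monomial]

namespace FloerDatum

variable (F : FloerDatum Λ V)

def powD₂ (n : ℕ) : Λ →ₗ[Λ] V := (F.U ^ n) ∘ₗ F.D₂

lemma hatd_eq : hatd F = (F.d ∘ₗ LinearMap.fst Λ V Λ[X]
    - polySum F.powD₂ ∘ₗ LinearMap.snd Λ V Λ[X]).prod 0 := rfl

lemma powD₂_zero (a : Λ) : F.powD₂ 0 a = F.D₂ a := rfl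

lemma powD₂_succ (n : ℕ) (a : Λ) : F.powD₂ (n + 1) a = F.U (F.powD₂ n a) := by
  rw [powD₂, powD₂, pow_succ', LinearMap.comp_apply, LinearMap.comp_apply, Module.End.mul_apply]

lemma d_U_apply (v : V) : F.d (F.U v) = F.U (F.d v) + F.D₂ (F.D₁ v) := by
  have h := LinearMap.congr_fun F.U_rel v
  simp only [LinearMap.add_apply, LinearMap.sub_apply, LinearMap.comp_apply,
    LinearMap.zero_apply] at h
  linear_combination (norm := module) -h

lemma powD₂_mem (n : ℕ) (a : Λ) : F.powD₂ n a ∈ F.gr (4 - 4 * n) := by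
  induction n with
  | zero => simpa only [Nat.cast_zero, mul_zero, sub_zero, powD₂_zero] using F.D₂_mem a
  | succ n ih =>
    rw [powD₂_succ, show (4 : ZMod 8) - 4 * ↑(n + 1) = 4 - 4 * n - 4 by push_cast; ring]
    exact F.U_mem _ _ ih

-- `powD₂ n` lands in degree `4 - 4n ∈ {0, 4}`, never in degree `1` where `D₁` lives.
lemma D₁_powD₂ (n : ℕ) (a : Λ) : F.D₁ (F.powD₂ n a) = 0 :=
  F.D₁_vanish _ (by generalize (n : ZMod 8) = z; revert z; decide) _ (F.powD₂_mem n a)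

lemma d_powD₂ (n : ℕ) (a : Λ) : F.d (F.powD₂ n a) = 0 := by
  induction n with
  | zero => exact LinearMap.congr_fun F.d_D₂ a
  | succ n ih => rw [powD₂_succ, d_U_apply, ih, D₁_powD₂, map_zero, map_zero, add_zero]

end FloerDatum

namespace CobordismDatum

variable {F : FloerDatum Λ V} {F' : FloerDatum Λ V'} (G : CobordismDatum F F')

def fstCoeff (n : ℕ) : Λ →ₗ[Λ] V' :=
  (F'.U ^ n) ∘ₗ G.Δ₂ + ∑ k ∈ range n, (F'.U ^ k) ∘ₗ G.μ ∘ₗ (F.U ^ (n - 1 - k)) ∘ₗ F.D₂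

def sndCoeff (k : ℕ) : Λ →ₗ[Λ] Λ[X] :=
  (∑ i ∈ range k,
    (LinearMap.smulRight (F'.D₁ ∘ₗ (F'.U ^ (k - 1 - i)) ∘ₗ G.Δ₂) ((X : Λ[X]) ^ i)
      + LinearMap.smulRight (G.Δ₁ ∘ₗ (F.U ^ (k - 1 - i)) ∘ₗ F.D₂) ((X : Λ[X]) ^ i)))
  + ∑ j ∈ range k, ∑ i ∈ range j,
      LinearMap.smulRight
        (F'.D₁ ∘ₗ (F'.U ^ (j - i - 1)) ∘ₗ G.μ ∘ₗ (F.U ^ (k - j - 1)) ∘ₗ F.D₂) ((X : Λ[X]) ^ i)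

lemma hatCW_eq : hatCW G = (G.φ ∘ₗ LinearMap.fst Λ V Λ[X]
      + polySum G.fstCoeff ∘ₗ LinearMap.snd Λ V Λ[X]).prod
    (G.c • LinearMap.snd Λ V Λ[X] + polySum G.sndCoeff ∘ₗ LinearMap.snd Λ V Λ[X]) := rfl

def scalarCoeff (n : ℕ) : Λ →ₗ[Λ] Λ := F'.D₁ ∘ₗ G.fstCoeff n + G.Δ₁ ∘ₗ F.powD₂ n

lemma φ_U_apply (v : V) :
    G.φ (F.U v) = F'.U (G.φ v) + F'.D₂ (G.Δ₁ v) - G.μ (F.d v) - F'.d (G.μ v)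
      - G.Δ₂ (F.D₁ v) := by
  have h := LinearMap.congr_fun G.rel_U v
  simp only [LinearMap.add_apply, LinearMap.sub_apply, LinearMap.comp_apply,
    LinearMap.zero_apply] at h
  linear_combination (norm := module) h

lemma fstCoeff_succ (n : ℕ) (a : Λ) :
    G.fstCoeff (n + 1) a = F'.U (G.fstCoeff n a) + G.μ (F.powD₂ n a) := by
  simp only [fstCoeff, FloerDatum.powD₂, LinearMap.add_apply, LinearMap.sum_apply,
    LinearMap.comp_apply, map_add, map_sum, sum_range_succ', pow_succ', Module.End.mul_apply,
    pow_zero, Module.End.one_apply, add_tsub_cancel_right, tsub_zero, Nat.sub_add_eq,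
    Nat.sub_right_comm n 1]
  abel

lemma sndCoeff_eq_sum (n : ℕ) :
    G.sndCoeff n = ∑ i ∈ range n, LinearMap.smulRight (G.scalarCoeff (n - 1 - i)) (X ^ i) := by
  refine LinearMap.ext fun a => ?_
  simp only [sndCoeff, scalarCoeff, fstCoeff, FloerDatum.powD₂, LinearMap.add_apply,
    LinearMap.sum_apply, LinearMap.smulRight_apply, LinearMap.comp_apply, map_add, map_sum,
    add_smul, sum_smul, sum_add_distrib]
  rw [sum_range_sum_range_eq_sum_range_sum_range_sub]
  simp only [show ∀ i l, i + 1 + l - i - 1 = l by omega,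
    show ∀ i l, n - (i + 1 + l) - 1 = n - 1 - i - 1 - l by omega]
  abel

lemma d_fstCoeff_add_φ_powD₂ (n : ℕ) (a : Λ) :
    F'.d (G.fstCoeff n a) + G.φ (F.powD₂ n a)
      = G.c • F'.powD₂ n a + ∑ i ∈ range n, F'.powD₂ i (G.scalarCoeff (n - 1 - i) a) := by
  induction n with
  | zero =>
    have h := LinearMap.congr_fun G.rel_D₂ a
    simp only [LinearMap.comp_apply, LinearMap.sub_apply, LinearMap.smul_apply] at h
    simp only [fstCoeff, pow_zero, range_zero, sum_empty, add_zero, LinearMap.comp_apply,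
      Module.End.one_apply, FloerDatum.powD₂_zero]
    linear_combination (norm := module) h
  | succ n ih =>
    rw [fstCoeff_succ, F.powD₂_succ, F'.powD₂_succ, map_add, F'.d_U_apply, φ_U_apply,
      F.d_powD₂, map_zero, F.D₁_powD₂, map_zero, sum_range_succ', Nat.add_sub_cancel,
      Nat.sub_zero, F'.powD₂_zero, scalarCoeff, LinearMap.add_apply, LinearMap.comp_apply,
      LinearMap.comp_apply]
    have hsum : ∑ k ∈ range n, F'.powD₂ (k + 1) (G.scalarCoeff (n - (k + 1)) a)
        = F'.U (∑ k ∈ range n, F'.powD₂ k (G.scalarCoeff (n - 1 - k) a)) := by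
      rw [map_sum]
      exact sum_congr rfl fun k _ => by rw [F'.powD₂_succ, Nat.sub_add_eq, Nat.sub_right_comm]
    have hU := congrArg F'.U ih
    simp only [map_add, map_smul] at hU
    rw [hsum, map_add]
    linear_combination (norm := module) hU

lemma polySum_powD₂_sndCoeff (n : ℕ) (a : Λ) :
    polySum F'.powD₂ (G.sndCoeff n a)
      = ∑ i ∈ range n, F'.powD₂ i (G.scalarCoeff (n - 1 - i) a) := by
  simp only [sndCoeff_eq_sum, LinearMap.sum_apply, LinearMap.smulRight_apply, map_sum,
    polySum_smul_X_pow]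

end CobordismDatum

/-- The cobordism map `ĈW` is a chain map: `d̂′ ∘ ĈW = ĈW ∘ d̂`. -/
theorem stmt_8 {F : FloerDatum Λ V} {F' : FloerDatum Λ V'} (G : CobordismDatum F F') :
    hatd F' ∘ₗ hatCW G = hatCW G ∘ₗ hatd F := by
  refine LinearMap.prod_ext (LinearMap.ext fun α => ?_)
    (lhom_ext' fun n => LinearMap.ext fun a => ?_)
  · simpa [F.hatd_eq, F'.hatd_eq, G.hatCW_eq] using (LinearMap.congr_fun G.rel_d α).symm
  · have key := G.d_fstCoeff_add_φ_powD₂ n a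
    rw [← G.polySum_powD₂_sndCoeff] at key
    simp only [F.hatd_eq, F'.hatd_eq, G.hatCW_eq, LinearMap.coe_comp, LinearMap.coe_inr,
      Function.comp_apply, LinearMap.prod_apply, Function.prod_apply, LinearMap.add_apply,
      LinearMap.coe_fst, LinearMap.coe_snd, LinearMap.smul_apply, LinearMap.snd_apply,
      LinearMap.sub_apply, LinearMap.zero_apply, polySum_monomial, map_add, map_smul, map_neg,
      map_zero, zero_add, add_zero, zero_sub, smul_zero, Prod.mk.injEq, and_true]
    linear_combination (norm := module) key
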